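/- arXiv:2109.01902 — 4 statements merged into one kernel-verified Lean document; each statement's English description precedes it below -/
import Mathlib

section
/- Let d, d' be positive integers and let the hypothesis h = g ∘ f with f : ℝ^d → ℝ^{d'} an invertible representation function and g : ℝ^{d'} → 𝒴 a labeling function. Let the unseen domain be (μ^{(u)}, f^{(u)}, g^{(u)}) with true hypothesis h^{(u)} = g^{(u)} ∘ f^{(u)}, and the seen domain be (μ^{(s)}, f^{(s)}, g^{(s)}) with true hypothesis h^{(s)} = g^{(s)} ∘ f^{(s)}. Assume the loss function ℓ is nonnegative, symmetric, bounded by a finite positive number L, and satisfies the triangle inequality. Then R^{(u)}(h) ≤ R^{(s)}(h) + L ‖f_# μ^{(u)} − f_# μ^{(s)}‖₁ + σ^{(u,s)}, where σ^{(u,s)} := min{ E_{x∼μ^{(u)}}[ℓ(h^{(u)}(x), h^{(s)}(x))], E_{x∼μ^{(s)}}[ℓ(h^{(u)}(x), h^{(s)}(x))] }. -/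
/-! Write `h = g ∘ f`, `hᵤ = gᵤ ∘ fᵤ`, `hₛ = gₛ ∘ fₛ`. Pointwise, the triangle inequality and
symmetry of `ℓ` give `ℓ(h, hᵤ) ≤ ℓ(h, hₛ) + ℓ(hᵤ, hₛ)`. Integrating this against `μᵤ`, or against
`μₛ`, leaves one risk to be moved from `μᵤ` to `μₛ`. For a function bounded by `L`, moving its
integral between two measures costs at most `L` times their L¹ distance; since `f` is injective,
every function of `x` is a function of `f x`, so the distance of the pushforwards by `f` suffices. -/

open MeasureTheory

/-- The L¹ (total variation) distance between two measures:
`‖μ − ν‖₁ = ∫ |dμ/dλ − dν/dλ| dλ` where `λ = μ + ν` is a common dominating measure. -/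
noncomputable def l1Dist {α : Type*} [MeasurableSpace α] (μ ν : Measure α) : ℝ :=
  ∫ x, |(μ.rnDeriv (μ + ν) x).toReal - (ν.rnDeriv (μ + ν) x).toReal| ∂(μ + ν)

section

variable {α β Y : Type*} [MeasurableSpace α] [MeasurableSpace β] [MeasurableSpace Y]

theorem integral_le_integral_add_mul_l1Dist {ρ τ : Measure α} [IsFiniteMeasure ρ]
    [IsFiniteMeasure τ] {ψ : α → ℝ} {L : ℝ} (hψ : Measurable ψ) (hψL : ∀ x, |ψ x| ≤ L) :
    ∫ x, ψ x ∂ρ ≤ ∫ x, ψ x ∂τ + L * l1Dist ρ τ := by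
  set p : α → ℝ := fun x => (ρ.rnDeriv (ρ + τ) x).toReal
  set q : α → ℝ := fun x => (τ.rnDeriv (ρ + τ) x).toReal
  have hp : Integrable p (ρ + τ) := Measure.integrable_toReal_rnDeriv
  have hq : Integrable q (ρ + τ) := Measure.integrable_toReal_rnDeriv
  have hψ_bdd : ∀ᵐ x ∂(ρ + τ), ‖ψ x‖ ≤ L := ae_of_all _ hψL
  have hpψ : Integrable (fun x => p x * ψ x) (ρ + τ) :=
    hp.mul_bdd hψ.aestronglyMeasurable hψ_bdd
  have hqψ : Integrable (fun x => q x * ψ x) (ρ + τ) :=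
    hq.mul_bdd hψ.aestronglyMeasurable hψ_bdd
  have hρ : ∫ x, ψ x ∂ρ = ∫ x, p x * ψ x ∂(ρ + τ) :=
    (integral_rnDeriv_smul (Measure.AbsolutelyContinuous.rfl.add_right τ)).symm
  have hτ : ∫ x, ψ x ∂τ = ∫ x, q x * ψ x ∂(ρ + τ) :=
    (integral_rnDeriv_smul (Measure.AbsolutelyContinuous.rfl.add_right' ρ)).symm
  have hpointwise : ∀ x, p x * ψ x - q x * ψ x ≤ L * |p x - q x| := fun x =>
    calc p x * ψ x - q x * ψ x = (p x - q x) * ψ x := by ring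
      _ ≤ |p x - q x| * |ψ x| := by rw [← abs_mul]; exact le_abs_self _
      _ ≤ |p x - q x| * L := by gcongr; exact hψL x
      _ = L * |p x - q x| := mul_comm _ _
  have hdiff : ∫ x, p x * ψ x ∂(ρ + τ) - ∫ x, q x * ψ x ∂(ρ + τ) ≤ L * l1Dist ρ τ :=
    calc ∫ x, p x * ψ x ∂(ρ + τ) - ∫ x, q x * ψ x ∂(ρ + τ)
        = ∫ x, (p x * ψ x - q x * ψ x) ∂(ρ + τ) := (integral_sub hpψ hqψ).symm
      _ ≤ ∫ x, L * |p x - q x| ∂(ρ + τ) :=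
        integral_mono (hpψ.sub hqψ) ((hp.sub hq).abs.const_mul L) hpointwise
      _ = L * l1Dist ρ τ := integral_const_mul L _
  linarith

theorem MeasurableEmbedding.integral_le_integral_add_mul_l1Dist_map [Nonempty α] {f : α → β}
    (hf : MeasurableEmbedding f) {μ ν : Measure α} [IsFiniteMeasure μ] [IsFiniteMeasure ν]
    {φ : α → ℝ} {L : ℝ} (hφ : Measurable φ) (hφL : ∀ x, |φ x| ≤ L) :
    ∫ x, φ x ∂μ ≤ ∫ x, φ x ∂ν + L * l1Dist (μ.map f) (ν.map f) := by
  have h := integral_le_integral_add_mul_l1Dist (ρ := μ.map f) (τ := ν.map f)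
    (hφ.comp hf.measurable_invFun) (fun y => hφL _)
  simpa only [hf.integral_map, Function.comp_apply, hf.leftInverse_invFun _] using h

theorem integrable_loss_comp {ν : Measure α} [IsFiniteMeasure ν] {ℓ : Y → Y → ℝ} {L : ℝ}
    (hℓ : Measurable (Function.uncurry ℓ)) (hℓL : ∀ a b, |ℓ a b| ≤ L) {a b : α → Y}
    (ha : Measurable a) (hb : Measurable b) : Integrable (fun x => ℓ (a x) (b x)) ν :=
  Integrable.of_bound (hℓ.comp (ha.prodMk hb)).aestronglyMeasurable L
    (ae_of_all _ fun _ => hℓL _ _)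

theorem integral_loss_le_add {ν : Measure α} [IsFiniteMeasure ν] {ℓ : Y → Y → ℝ} {L : ℝ}
    (hℓ : Measurable (Function.uncurry ℓ)) (hℓL : ∀ a b, |ℓ a b| ≤ L)
    (hℓsymm : ∀ a b, ℓ a b = ℓ b a) (hℓtri : ∀ a b c, ℓ a c ≤ ℓ a b + ℓ b c) {a b c : α → Y}
    (ha : Measurable a) (hb : Measurable b) (hc : Measurable c) :
    ∫ x, ℓ (a x) (c x) ∂ν ≤ ∫ x, ℓ (a x) (b x) ∂ν + ∫ x, ℓ (c x) (b x) ∂ν := by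
  rw [← integral_add (integrable_loss_comp hℓ hℓL ha hb) (integrable_loss_comp hℓ hℓL hc hb)]
  refine integral_mono (integrable_loss_comp hℓ hℓL ha hc)
    ((integrable_loss_comp hℓ hℓL ha hb).add (integrable_loss_comp hℓ hℓL hc hb)) fun x => ?_
  rw [hℓsymm (c x)]
  exact hℓtri _ _ _

end

theorem lemma1_seen_unseen_risk_bound_general
    (d d' : ℕ) {Y : Type*} [MeasurableSpace Y]
    (μu μs : Measure (EuclideanSpace ℝ (Fin d)))
    [IsProbabilityMeasure μu] [IsProbabilityMeasure μs]
    (f fu fs : EuclideanSpace ℝ (Fin d) → EuclideanSpace ℝ (Fin d'))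
    (g gu gs : EuclideanSpace ℝ (Fin d') → Y)
    (hf : Measurable f) (hfu : Measurable fu) (hfs : Measurable fs)
    (hg : Measurable g) (hgu : Measurable gu) (hgs : Measurable gs)
    (hfinv : Function.Bijective f)
    (ℓ : Y → Y → ℝ) (L : ℝ)
    (hℓmeas : Measurable (Function.uncurry ℓ))
    (hℓnonneg : ∀ a b, 0 ≤ ℓ a b)
    (hℓsymm : ∀ a b, ℓ a b = ℓ b a)
    (hℓbdd : ∀ a b, ℓ a b ≤ L)
    (hℓtri : ∀ a b c, ℓ a c ≤ ℓ a b + ℓ b c) :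
    ∫ x, ℓ (g (f x)) (gu (fu x)) ∂μu ≤
      (∫ x, ℓ (g (f x)) (gs (fs x)) ∂μs)
      + L * l1Dist (μu.map f) (μs.map f)
      + min (∫ x, ℓ (gu (fu x)) (gs (fs x)) ∂μu)
            (∫ x, ℓ (gu (fu x)) (gs (fs x)) ∂μs) := by
  have hℓL : ∀ a b, |ℓ a b| ≤ L := fun a b => (abs_of_nonneg (hℓnonneg a b)).trans_le (hℓbdd a b)
  have hh : Measurable fun x => g (f x) := hg.comp hf
  have hhu : Measurable fun x => gu (fu x) := hgu.comp hfu
  have hhs : Measurable fun x => gs (fs x) := hgs.comp hfs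
  have split (ν : Measure (EuclideanSpace ℝ (Fin d))) [IsFiniteMeasure ν] :
      ∫ x, ℓ (g (f x)) (gu (fu x)) ∂ν
        ≤ ∫ x, ℓ (g (f x)) (gs (fs x)) ∂ν + ∫ x, ℓ (gu (fu x)) (gs (fs x)) ∂ν :=
    integral_loss_le_add hℓmeas hℓL hℓsymm hℓtri hh hhs hhu
  have transfer {a b : EuclideanSpace ℝ (Fin d) → Y} (ha : Measurable a) (hb : Measurable b) :
      ∫ x, ℓ (a x) (b x) ∂μu ≤ ∫ x, ℓ (a x) (b x) ∂μs + L * l1Dist (μu.map f) (μs.map f) :=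
    (hf.measurableEmbedding hfinv.injective).integral_le_integral_add_mul_l1Dist_map
      (hℓmeas.comp (ha.prodMk hb)) fun x => hℓL _ _
  rw [← min_add_add_left]
  exact le_min (by linarith [split μu, transfer hh hhs]) (by linarith [split μs, transfer hh hhu])

/-- **Lemma 1**: for an invertible representation `f` and a loss `ℓ` that is nonnegative,
symmetric, bounded by `L` and satisfies the triangle inequality, the unseen-domain risk of
`h = g ∘ f` is bounded by the seen-domain risk, `L` times the L¹ distance between the
pushforward representation distributions, and the combined risk `σ^{(u,s)}`. -/
theorem lemma1_seen_unseen_risk_bound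
    (d d' : ℕ) (hd : 0 < d) (hd' : 0 < d') {Y : Type*} [MeasurableSpace Y]
    (μu μs : Measure (EuclideanSpace ℝ (Fin d)))
    [IsProbabilityMeasure μu] [IsProbabilityMeasure μs]
    (f fu fs : EuclideanSpace ℝ (Fin d) → EuclideanSpace ℝ (Fin d'))
    (g gu gs : EuclideanSpace ℝ (Fin d') → Y)
    (hf : Measurable f) (hfu : Measurable fu) (hfs : Measurable fs)
    (hg : Measurable g) (hgu : Measurable gu) (hgs : Measurable gs)
    (hfinv : Function.Bijective f)
    (ℓ : Y → Y → ℝ) (L : ℝ) (hL : 0 < L)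
    (hℓmeas : Measurable (Function.uncurry ℓ))
    (hℓnonneg : ∀ a b, 0 ≤ ℓ a b)
    (hℓsymm : ∀ a b, ℓ a b = ℓ b a)
    (hℓbdd : ∀ a b, ℓ a b ≤ L)
    (hℓtri : ∀ a b c, ℓ a c ≤ ℓ a b + ℓ b c) :
    ∫ x, ℓ (g (f x)) (gu (fu x)) ∂μu ≤
      (∫ x, ℓ (g (f x)) (gs (fs x)) ∂μs)
      + L * l1Dist (μu.map f) (μs.map f)
      + min (∫ x, ℓ (gu (fu x)) (gs (fs x)) ∂μu)
            (∫ x, ℓ (gu (fu x)) (gs (fs x)) ∂μs) :=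
  lemma1_seen_unseen_risk_bound_general d d' μu μs f fu fs g gu gs hf hfu hfs hg hgu hgs hfinv ℓ L
    hℓmeas hℓnonneg hℓsymm hℓbdd hℓtri
end

section
/- Let h = g ∘ f be a hypothesis, and let h^{(u)} and h^{(s)} be the true hypotheses of the unseen and seen domains with input distributions μ^{(u)} and μ^{(s)}. If the loss function ℓ is nonnegative, symmetric, and satisfies the triangle inequality, then R^{(u)}(h) ≤ R^{(s)}(h) + E_{x∼μ^{(u)}}[ℓ(h^{(u)}(x), h^{(s)}(x))] + ( E_{x∼μ^{(u)}}[ℓ(h(x), h^{(s)}(x))] − E_{x∼μ^{(s)}}[ℓ(h(x), h^{(s)}(x))] ). -/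
open MeasureTheory

/-- Inequality (12) in the proof of Lemma 1: if the loss `ℓ` is nonnegative, symmetric and
satisfies the triangle inequality, then for the hypothesis `h = g ∘ f` and the true hypotheses
`h⁽ᵘ⁾, h⁽ˢ⁾` of the unseen/seen domains,
`R⁽ᵘ⁾(h) ≤ R⁽ˢ⁾(h) + E_{μ⁽ᵘ⁾}[ℓ(h⁽ᵘ⁾, h⁽ˢ⁾)] + (E_{μ⁽ᵘ⁾}[ℓ(h, h⁽ˢ⁾)] − E_{μ⁽ˢ⁾}[ℓ(h, h⁽ˢ⁾)])`. -/
theorem risk_decomposition_triangle_bound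
    (d d' : ℕ) {Y : Type*}
    (μu μs : Measure (EuclideanSpace ℝ (Fin d)))
    [IsProbabilityMeasure μu] [IsProbabilityMeasure μs]
    (f fu fs : EuclideanSpace ℝ (Fin d) → EuclideanSpace ℝ (Fin d'))
    (g gu gs : EuclideanSpace ℝ (Fin d') → Y)
    (ℓ : Y → Y → ℝ)
    (hℓnonneg : ∀ a b, 0 ≤ ℓ a b)
    (hℓsymm : ∀ a b, ℓ a b = ℓ b a)
    (hℓtri : ∀ a b c, ℓ a c ≤ ℓ a b + ℓ b c)
    (hint₁ : Integrable (fun x => ℓ (g (f x)) (gu (fu x))) μu)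
    (hint₂ : Integrable (fun x => ℓ (gu (fu x)) (gs (fs x))) μu)
    (hint₃ : Integrable (fun x => ℓ (g (f x)) (gs (fs x))) μu)
    (hint₄ : Integrable (fun x => ℓ (g (f x)) (gs (fs x))) μs) :
    ∫ x, ℓ (g (f x)) (gu (fu x)) ∂μu ≤
      (∫ x, ℓ (g (f x)) (gs (fs x)) ∂μs)
      + (∫ x, ℓ (gu (fu x)) (gs (fs x)) ∂μu)
      + ((∫ x, ℓ (g (f x)) (gs (fs x)) ∂μu) - (∫ x, ℓ (g (f x)) (gs (fs x)) ∂μs)) := by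
  have h1 : ∫ x, ℓ (g (f x)) (gu (fu x)) ∂μu ≤
      ∫ x, (ℓ (g (f x)) (gs (fs x)) + ℓ (gu (fu x)) (gs (fs x))) ∂μu := by
    refine integral_mono hint₁ (hint₃.add hint₂) (fun x => ?_)
    calc ℓ (g (f x)) (gu (fu x)) ≤ ℓ (g (f x)) (gs (fs x)) + ℓ (gs (fs x)) (gu (fu x)) :=
          hℓtri _ _ _
      _ = ℓ (g (f x)) (gs (fs x)) + ℓ (gu (fu x)) (gs (fs x)) := by rw [hℓsymm (gs (fs x))]
  rw [integral_add hint₃ hint₂] at h1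
  linarith
end

section
/- Let h = g ∘ f with f : ℝ^d → ℝ^{d'} a nearly invertible representation function, i.e., there exists a reconstruction map s : ℝ^{d'} → ℝ^d and δ > 0 such that whenever f(x) = z, ‖x − s(z)‖ ≤ δ. Suppose the unseen-domain true hypothesis h^{(u)} = g^{(u)} ∘ f^{(u)} : ℝ^d → ℝ is K-Lipschitz continuous and the loss function ℓ is Q-Lipschitz in its second argument (ℓ(a, b) − Q|γ| ≤ ℓ(a, b + γ) ≤ ℓ(a, b) + Q|γ| for all a, b, γ), is a distance metric, and is bounded by a finite positive number L. Then E_{x∼μ^{(u)}}[ℓ(h(x), h^{(u)}(x))] − E_{x∼μ^{(s)}}[ℓ(h(x), h^{(u)}(x))] ≤ L ‖f_# μ^{(u)} − f_# μ^{(s)}‖₁ + 2QKδ. -/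
open MeasureTheory

/-!
Along a fibre of `f` the risk integrand `I x = ℓ (h x) (h⁽ᵘ⁾ x)` varies by at most `2QKδ`: two
points with the same representation are `2δ`-close through `s`, so `h⁽ᵘ⁾` moves by at most `2Kδ`
and `ℓ` by `Q` times that. If `I` were within this oscillation of `H ∘ f` for a measurable
`0 ≤ H ≤ L`, the bound would follow by writing the integrals of `H` against the two pushforwards
through their densities with respect to their sum. The supremum of `I` over a fibre need not be
Borel, so we refine the topology of the source to a Polish one making `f` and `I` continuous and
take the supremum only over a compact set `K` carrying all but `ε` of the mass: then
`{H ≥ t} = f (K ∩ {I ≥ t})` is compact, and outside `K` we lose at most `Lε`.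
-/

open Set Filter Topology

theorem integral_sub_integral_le_mul_l1Dist {Z : Type*} [MeasurableSpace Z]
    (ν₁ ν₂ : Measure Z) [IsFiniteMeasure ν₁] [IsFiniteMeasure ν₂] {H : Z → ℝ}
    (hH : Measurable H) {L : ℝ} (hHL : ∀ z, |H z| ≤ L) :
    ∫ z, H z ∂ν₁ - ∫ z, H z ∂ν₂ ≤ L * l1Dist ν₁ ν₂ := by
  set ρ := ν₁ + ν₂
  set r₁ : Z → ℝ := fun z => (ν₁.rnDeriv ρ z).toReal
  set r₂ : Z → ℝ := fun z => (ν₂.rnDeriv ρ z).toReal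
  have hr₁ : Integrable r₁ ρ := Measure.integrable_toReal_rnDeriv
  have hr₂ : Integrable r₂ ρ := Measure.integrable_toReal_rnDeriv
  have hHbdd : ∀ᵐ z ∂ρ, ‖H z‖ ≤ L := ae_of_all _ hHL
  have integral_eq : ∀ (ν : Measure Z) [IsFiniteMeasure ν], ν ≪ ρ →
      ∫ z, H z ∂ν = ∫ z, (ν.rnDeriv ρ z).toReal * H z ∂ρ := fun ν _ hν =>
    (integral_rnDeriv_smul hν).symm
  rw [integral_eq ν₁ (Measure.le_add_right le_rfl).absolutelyContinuous,
    integral_eq ν₂ (Measure.le_add_left le_rfl).absolutelyContinuous,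
    ← integral_sub (hr₁.mul_bdd hH.aestronglyMeasurable hHbdd)
      (hr₂.mul_bdd hH.aestronglyMeasurable hHbdd),
    l1Dist, ← integral_const_mul]
  refine integral_mono ((hr₁.sub hr₂).mul_bdd hH.aestronglyMeasurable hHbdd |>.congr
    (ae_of_all _ fun z => sub_mul _ _ _)) ((hr₁.sub hr₂).abs.const_mul L) fun z => ?_
  calc r₁ z * H z - r₂ z * H z = (r₁ z - r₂ z) * H z := (sub_mul _ _ _).symm
    _ ≤ |r₁ z - r₂ z| * |H z| := by rw [← abs_mul]; exact le_abs_self _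
    _ ≤ |r₁ z - r₂ z| * L := mul_le_mul_of_nonneg_left (hHL z) (abs_nonneg _)
    _ = L * |r₁ z - r₂ z| := mul_comm _ _

-- The inserted `0` keeps the set nonempty, so `fiberSup` is `0` on fibres missing `K`.
noncomputable def fiberSup {X Z : Type*} (K : Set X) (f : X → Z) (I : X → ℝ) (z : Z) : ℝ :=
  sSup (insert 0 (I '' (K ∩ f ⁻¹' {z})))

section FiberSup

variable {X Z : Type*} {K : Set X} {f : X → Z} {I : X → ℝ}

theorem fiberSup_le {z : Z} {c : ℝ} (hc : 0 ≤ c) (h : ∀ x ∈ K, f x = z → I x ≤ c) :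
    fiberSup K f I z ≤ c :=
  csSup_le (insert_nonempty _ _) <| by
    rintro _ (rfl | ⟨x, ⟨hxK, hxz⟩, rfl⟩)
    exacts [hc, h x hxK hxz]

variable [TopologicalSpace X] (hK : IsCompact K) (hI : Continuous I)
include hK hI

theorem bddAbove_fiberSup_set (z : Z) : BddAbove (insert 0 (I '' (K ∩ f ⁻¹' {z}))) :=
  ((hK.image hI).bddAbove.mono (image_mono inter_subset_left)).insert 0

theorem fiberSup_nonneg (z : Z) : 0 ≤ fiberSup K f I z :=
  le_csSup (bddAbove_fiberSup_set hK hI z) (mem_insert _ _)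

theorem le_fiberSup {x : X} (hx : x ∈ K) : I x ≤ fiberSup K f I (f x) :=
  le_csSup (bddAbove_fiberSup_set hK hI _) (mem_insert_of_mem _ ⟨x, ⟨hx, rfl⟩, rfl⟩)

variable [TopologicalSpace Z] [T1Space Z] (hf : Continuous f)
include hf

theorem fiberSup_preimage_Ici {t : ℝ} (ht : 0 < t) :
    fiberSup K f I ⁻¹' Ici t = f '' (K ∩ I ⁻¹' Ici t) := by
  ext z
  constructor
  · intro hz
    have hcompact : IsCompact (insert 0 (I '' (K ∩ f ⁻¹' {z}))) :=
      ((hK.inter_right (isClosed_singleton.preimage hf)).image hI).insert 0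
    rcases hcompact.sSup_mem (insert_nonempty _ _) with h0 | ⟨x, ⟨hxK, hxz⟩, hIx⟩
    · exact absurd ((h0 ▸ hz : t ≤ 0)) (not_le.2 ht)
    · exact ⟨x, ⟨hxK, (hIx ▸ hz : t ≤ I x)⟩, hxz⟩
  · rintro ⟨x, ⟨hxK, hxt⟩, rfl⟩
    exact le_trans hxt (le_fiberSup hK hI hxK)

theorem measurable_fiberSup [T2Space Z] [MeasurableSpace Z] [OpensMeasurableSpace Z] :
    Measurable (fiberSup K f I) := by
  refine measurable_of_Ici fun t => ?_
  rcases le_or_gt t 0 with ht | ht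
  · have : fiberSup K f I ⁻¹' Ici t = univ :=
      eq_univ_of_forall fun z => le_trans ht (fiberSup_nonneg hK hI z)
    exact this ▸ .univ
  · rw [fiberSup_preimage_Ici hK hI hf ht]
    exact ((hK.inter_right (isClosed_Ici.preimage hI)).image hf).isClosed.measurableSet

end FiberSup

theorem integral_sub_integral_le_of_sandwich {X Z : Type*} [MeasurableSpace X]
    [MeasurableSpace Z] (μ₁ μ₂ : Measure X) [IsFiniteMeasure μ₁] [IsProbabilityMeasure μ₂]
    {f : X → Z} (hf : Measurable f) {I : X → ℝ} (hI₁ : Integrable I μ₁) (hI₂ : Integrable I μ₂)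
    {H : Z → ℝ} (hH : Measurable H) {L osc : ℝ} (hHL : ∀ z, |H z| ≤ L)
    {E : Set X} (hE : MeasurableSet E)
    (hle : ∀ x, I x ≤ H (f x) + E.indicator (fun _ => L) x)
    (hge : ∀ x, H (f x) ≤ I x + osc + E.indicator (fun _ => L) x) :
    ∫ x, I x ∂μ₁ - ∫ x, I x ∂μ₂ ≤
      L * l1Dist (μ₁.map f) (μ₂.map f) + osc + L * (μ₁.real E + μ₂.real E) := by
  have hHf : ∀ (μ : Measure X) [IsFiniteMeasure μ], Integrable (fun x => H (f x)) μ :=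
    fun μ _ => .of_bound (hH.comp hf).aestronglyMeasurable L (ae_of_all _ fun x => hHL (f x))
  have hE' : ∀ (μ : Measure X) [IsFiniteMeasure μ], Integrable (E.indicator fun _ => L) μ :=
    fun μ _ => (integrable_const L).indicator hE
  have hmap : ∀ μ : Measure X, ∫ x, H (f x) ∂μ = ∫ z, H z ∂(μ.map f) :=
    fun μ => (integral_map hf.aemeasurable hH.aestronglyMeasurable).symm
  have h₁ : ∫ x, I x ∂μ₁ ≤ ∫ z, H z ∂(μ₁.map f) + μ₁.real E * L := by
    calc ∫ x, I x ∂μ₁ ≤ ∫ x, (H (f x) + E.indicator (fun _ => L) x) ∂μ₁ :=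
          integral_mono hI₁ ((hHf μ₁).add (hE' μ₁)) hle
      _ = _ := by rw [integral_add (hHf μ₁) (hE' μ₁), integral_indicator_const _ hE, hmap,
          smul_eq_mul]
  have hIosc : Integrable (fun x => I x + osc) μ₂ := hI₂.add (integrable_const osc)
  have h₂ : ∫ z, H z ∂(μ₂.map f) ≤ ∫ x, I x ∂μ₂ + osc + μ₂.real E * L := by
    calc ∫ z, H z ∂(μ₂.map f) ≤ ∫ x, (I x + osc + E.indicator (fun _ => L) x) ∂μ₂ :=
          hmap μ₂ ▸ integral_mono (hHf μ₂) (hIosc.add (hE' μ₂)) hge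
      _ = _ := by
        rw [integral_add hIosc (hE' μ₂), integral_add hI₂
          (integrable_const osc), integral_indicator_const _ hE, integral_const, probReal_univ,
          smul_eq_mul, smul_eq_mul, one_mul]
  have := integral_sub_integral_le_mul_l1Dist (μ₁.map f) (μ₂.map f) hH hHL
  linarith

section Continuous

variable {X Z : Type*} [TopologicalSpace X] [MeasurableSpace X] [TopologicalSpace Z]
  [T2Space Z] [MeasurableSpace Z] [BorelSpace Z]
  (μ₁ μ₂ : Measure X) [IsFiniteMeasure μ₁] [IsProbabilityMeasure μ₂]
  {f : X → Z} (hf : Continuous f) {I : X → ℝ} (hI : Continuous I)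
  {L osc : ℝ} (hL : 0 ≤ L) (hI0 : ∀ x, 0 ≤ I x) (hIL : ∀ x, I x ≤ L) (hosc : 0 ≤ osc)
  (hfiber : ∀ x y, f x = f y → I x ≤ I y + osc)
include hf hI hL hI0 hIL hosc hfiber

theorem integral_sub_integral_le_add_measureReal_compl [T2Space X] [OpensMeasurableSpace X]
    {K : Set X} (hK : IsCompact K) :
    ∫ x, I x ∂μ₁ - ∫ x, I x ∂μ₂ ≤
      L * l1Dist (μ₁.map f) (μ₂.map f) + osc + L * (μ₁.real Kᶜ + μ₂.real Kᶜ) := by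
  have hIint : ∀ (μ : Measure X) [IsFiniteMeasure μ], Integrable I μ := fun μ _ =>
    .of_bound hI.aestronglyMeasurable L
      (ae_of_all _ fun x => (abs_of_nonneg (hI0 x)).trans_le (hIL x))
  have hH0 := fiberSup_nonneg (f := f) hK hI
  have hHL : ∀ z, fiberSup K f I z ≤ L := fun z => fiberSup_le hL fun x _ _ => hIL x
  refine integral_sub_integral_le_of_sandwich μ₁ μ₂ hf.measurable (hIint μ₁) (hIint μ₂)
    (measurable_fiberSup hK hI hf) (fun z => (abs_of_nonneg (hH0 z)).trans_le (hHL z))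
    hK.isClosed.measurableSet.compl (fun x => ?_) (fun x => ?_)
  · by_cases hx : x ∈ K
    · simpa [hx] using le_fiberSup hK hI hx
    · simpa [hx] using (hIL x).trans (le_add_of_nonneg_left (hH0 (f x)))
  · by_cases hx : x ∈ K
    · simpa [hx] using fiberSup_le (add_nonneg (hI0 x) hosc) fun y _ hyx => hfiber y x hyx
    · simpa [hx] using (hHL (f x)).trans (le_add_of_nonneg_left (add_nonneg (hI0 x) hosc))

theorem integral_sub_integral_le_of_continuous [PolishSpace X] [BorelSpace X] :
    ∫ x, I x ∂μ₁ - ∫ x, I x ∂μ₂ ≤ L * l1Dist (μ₁.map f) (μ₂.map f) + osc := by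
  have key : ∀ ε > 0, ∫ x, I x ∂μ₁ - ∫ x, I x ∂μ₂ ≤
      L * l1Dist (μ₁.map f) (μ₂.map f) + osc + L * ε := by
    intro ε hε
    obtain ⟨K, hK, hKc⟩ := isTightMeasureSet_iff_exists_isCompact_measure_compl_le.1
      (isTightMeasureSet_singleton (μ := μ₁ + μ₂)) (ENNReal.ofReal ε) (by positivity)
    have hKc' : μ₁.real Kᶜ + μ₂.real Kᶜ ≤ ε := by
      rw [measureReal_def, measureReal_def, ← ENNReal.toReal_add (by finiteness) (by finiteness)]
      exact ENNReal.toReal_le_of_le_ofReal hε.le (hKc _ rfl)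
    have := integral_sub_integral_le_add_measureReal_compl μ₁ μ₂ hf hI hL hI0 hIL hosc hfiber hK
    linarith [mul_le_mul_of_nonneg_left hKc' hL]
  have hlim : Tendsto (fun ε => L * l1Dist (μ₁.map f) (μ₂.map f) + osc + L * ε) (𝓝[>] 0)
      (𝓝 (L * l1Dist (μ₁.map f) (μ₂.map f) + osc)) := by
    have hε : Tendsto (fun ε => L * ε) (𝓝[>] 0) (𝓝 0) := by
      simpa using ((tendsto_id (x := 𝓝 (0 : ℝ))).const_mul L).mono_left nhdsWithin_le_nhds
    simpa using tendsto_const_nhds.add hε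
  exact ge_of_tendsto hlim (eventually_nhdsWithin_of_forall key)

end Continuous

theorem Measurable.exists_polishSpace_borelSpace_continuous {X Y : Type*} [MeasurableSpace X]
    [StandardBorelSpace X] [TopologicalSpace Y] [SecondCountableTopology Y] [MeasurableSpace Y]
    [OpensMeasurableSpace Y] {φ : X → Y} (hφ : Measurable φ) :
    ∃ t : TopologicalSpace X, @PolishSpace X t ∧ @BorelSpace X t _ ∧ @Continuous X Y t _ φ := by
  let τ := upgradeStandardBorel X
  obtain ⟨t, ht_le, ht_cont, ht_polish⟩ := hφ.exists_continuous
  exact ⟨t, ht_polish, ⟨((borel_eq_borel_of_le ht_polish τ.toPolishSpace ht_le).trans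
    (eq_borel_upgradeStandardBorel X).symm).symm⟩, ht_cont⟩

theorem integral_sub_integral_le_of_fiber_oscillation {X Z : Type*} [MeasurableSpace X]
    [StandardBorelSpace X] [TopologicalSpace Z] [T2Space Z] [SecondCountableTopology Z]
    [MeasurableSpace Z] [BorelSpace Z]
    (μ₁ μ₂ : Measure X) [IsFiniteMeasure μ₁] [IsProbabilityMeasure μ₂]
    {f : X → Z} (hf : Measurable f) {I : X → ℝ} (hI : Measurable I)
    {L osc : ℝ} (hL : 0 ≤ L) (hI0 : ∀ x, 0 ≤ I x) (hIL : ∀ x, I x ≤ L) (hosc : 0 ≤ osc)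
    (hfiber : ∀ x y, f x = f y → I x ≤ I y + osc) :
    ∫ x, I x ∂μ₁ - ∫ x, I x ∂μ₂ ≤ L * l1Dist (μ₁.map f) (μ₂.map f) + osc := by
  obtain ⟨t, _, _, hcont⟩ := (hf.prodMk hI).exists_polishSpace_borelSpace_continuous
  exact integral_sub_integral_le_of_continuous μ₁ μ₂ hcont.fst hcont.snd hL hI0 hIL hosc hfiber

theorem abs_sub_le_of_reconstruction {E Y : Type*} [SeminormedAddCommGroup E] {f : E → Y}
    {s : Y → E} {δ : ℝ} (hrecon : ∀ x, ‖x - s (f x)‖ ≤ δ) {h : E → ℝ} {K : ℝ} (hK : 0 ≤ K)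
    (hh : ∀ x y, |h x - h y| ≤ K * ‖x - y‖) {x y : E} (hxy : f x = f y) :
    |h x - h y| ≤ 2 * K * δ := by
  have hdist : ‖x - y‖ ≤ 2 * δ := by
    calc ‖x - y‖ ≤ ‖x - s (f x)‖ + ‖y - s (f y)‖ := by
          rw [hxy, ← norm_neg (y - _), neg_sub]; exact norm_sub_le_norm_sub_add_norm_sub _ _ _
      _ ≤ 2 * δ := by linarith [hrecon x, hrecon y]
  calc |h x - h y| ≤ K * ‖x - y‖ := hh x y
    _ ≤ K * (2 * δ) := mul_le_mul_of_nonneg_left hdist hK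
    _ = 2 * K * δ := by ring

theorem nearly_invertible_risk_difference_bound_general
    (d d' : ℕ)
    (μu μs : Measure (EuclideanSpace ℝ (Fin d)))
    [IsProbabilityMeasure μu] [IsProbabilityMeasure μs]
    (f fu : EuclideanSpace ℝ (Fin d) → EuclideanSpace ℝ (Fin d'))
    (g gu : EuclideanSpace ℝ (Fin d') → ℝ)
    (hf : Measurable f) (hfu : Measurable fu)
    (hg : Measurable g) (hgu : Measurable gu)
    -- `f` is nearly invertible: a reconstruction map `s` with error at most `δ`
    (s : EuclideanSpace ℝ (Fin d') → EuclideanSpace ℝ (Fin d))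
    (δ : ℝ) (hδ : 0 < δ)
    (hrecon : ∀ x, ‖x - s (f x)‖ ≤ δ)
    -- the true unseen hypothesis `h⁽ᵘ⁾ = g⁽ᵘ⁾ ∘ f⁽ᵘ⁾` is `K`-Lipschitz
    (K : ℝ) (hK : 0 ≤ K)
    (hLip : ∀ x y, |gu (fu x) - gu (fu y)| ≤ K * ‖x - y‖)
    -- the loss is `Q`-Lipschitz in its second argument, a distance metric, bounded by `L`
    (ℓ : ℝ → ℝ → ℝ) (Q : ℝ) (hQ : 0 ≤ Q)
    (hℓmeas : Measurable (Function.uncurry ℓ))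
    (hℓQ : ∀ a b γ : ℝ, ℓ a b - Q * |γ| ≤ ℓ a (b + γ) ∧ ℓ a (b + γ) ≤ ℓ a b + Q * |γ|)
    (hℓnonneg : ∀ a b, 0 ≤ ℓ a b)
    (L : ℝ) (hL : 0 < L)
    (hℓbdd : ∀ a b, ℓ a b ≤ L) :
    (∫ x, ℓ (g (f x)) (gu (fu x)) ∂μu) - (∫ x, ℓ (g (f x)) (gu (fu x)) ∂μs) ≤
      L * l1Dist (μu.map f) (μs.map f) + 2 * Q * K * δ := by
  refine integral_sub_integral_le_of_fiber_oscillation μu μs hf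
    (hℓmeas.comp ((hg.comp hf).prodMk (hgu.comp hfu))) hL.le (fun _ => hℓnonneg _ _)
    (fun _ => hℓbdd _ _) (by positivity) fun x y hxy => ?_
  have hγ := abs_sub_le_of_reconstruction hrecon hK hLip hxy
  have hℓ := (hℓQ (g (f y)) (gu (fu y)) (gu (fu x) - gu (fu y))).2
  rw [add_sub_cancel] at hℓ
  show ℓ (g (f x)) (gu (fu x)) ≤ ℓ (g (f y)) (gu (fu y)) + 2 * Q * K * δ
  rw [hxy]
  linarith [mul_le_mul_of_nonneg_left hγ hQ]

/-- Extension of the discrepancy estimate of Lemma 1 to nearly invertible representation maps: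
if there is a reconstruction map `s` with `‖x − s(f(x))‖ ≤ δ`, the true unseen hypothesis
`h⁽ᵘ⁾` is `K`-Lipschitz, and the loss `ℓ` is a distance metric, `Q`-Lipschitz in its second
argument and bounded by `L`, then
`E_{μ⁽ᵘ⁾}[ℓ(h, h⁽ᵘ⁾)] − E_{μ⁽ˢ⁾}[ℓ(h, h⁽ᵘ⁾)] ≤ L ‖f_# μ⁽ᵘ⁾ − f_# μ⁽ˢ⁾‖₁ + 2QKδ`. -/
theorem nearly_invertible_risk_difference_bound
    (d d' : ℕ)
    (μu μs : Measure (EuclideanSpace ℝ (Fin d)))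
    [IsProbabilityMeasure μu] [IsProbabilityMeasure μs]
    (f fu : EuclideanSpace ℝ (Fin d) → EuclideanSpace ℝ (Fin d'))
    (g gu : EuclideanSpace ℝ (Fin d') → ℝ)
    (hf : Measurable f) (hfu : Measurable fu)
    (hg : Measurable g) (hgu : Measurable gu)
    -- `f` is nearly invertible: a reconstruction map `s` with error at most `δ`
    (s : EuclideanSpace ℝ (Fin d') → EuclideanSpace ℝ (Fin d))
    (δ : ℝ) (hδ : 0 < δ)
    (hrecon : ∀ x, ‖x - s (f x)‖ ≤ δ)
    -- the true unseen hypothesis `h⁽ᵘ⁾ = g⁽ᵘ⁾ ∘ f⁽ᵘ⁾` is `K`-Lipschitz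
    (K : ℝ) (hK : 0 ≤ K)
    (hLip : ∀ x y, |gu (fu x) - gu (fu y)| ≤ K * ‖x - y‖)
    -- the loss is `Q`-Lipschitz in its second argument, a distance metric, bounded by `L`
    (ℓ : ℝ → ℝ → ℝ) (Q : ℝ) (hQ : 0 ≤ Q)
    (hℓmeas : Measurable (Function.uncurry ℓ))
    (hℓQ : ∀ a b γ : ℝ, ℓ a b - Q * |γ| ≤ ℓ a (b + γ) ∧ ℓ a (b + γ) ≤ ℓ a b + Q * |γ|)
    (hℓnonneg : ∀ a b, 0 ≤ ℓ a b)
    (hℓsymm : ∀ a b, ℓ a b = ℓ b a)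
    (hℓtri : ∀ a b c, ℓ a c ≤ ℓ a b + ℓ b c)
    (hℓzero : ∀ a b, ℓ a b = 0 ↔ a = b)
    (L : ℝ) (hL : 0 < L)
    (hℓbdd : ∀ a b, ℓ a b ≤ L) :
    (∫ x, ℓ (g (f x)) (gu (fu x)) ∂μu) - (∫ x, ℓ (g (f x)) (gu (fu x)) ∂μs) ≤
      L * l1Dist (μu.map f) (μs.map f) + 2 * Q * K * δ :=
  nearly_invertible_risk_difference_bound_general d d' μu μs f fu g gu hf hfu hg hgu s δ hδ hrecon K
    hK hLip ℓ Q hQ hℓmeas hℓQ hℓnonneg L hL hℓbdd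
end

section
/- Let h = g ∘ f be a hypothesis, and let h^{(u)} and h^{(s)} be the true hypotheses of the unseen and seen domains with input distributions μ^{(u)} and μ^{(s)}. Assume f is invertible and the loss function ℓ is nonnegative, symmetric, bounded by a finite positive number L, and satisfies the triangle inequality. Then R^{(u)}(h) ≤ R^{(s)}(h) + E_{x∼μ^{(s)}}[ℓ(h^{(u)}(x), h^{(s)}(x))] + L ‖f_# μ^{(u)} − f_# μ^{(s)}‖₁. -/
open MeasureTheory

lemma integrable_of_bounded' {α : Type*} [MeasurableSpace α] {μ : Measure α}
    [IsFiniteMeasure μ] {w : α → ℝ} (hw : Measurable w) {L : ℝ}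
    (h0 : ∀ x, 0 ≤ w x) (hL : ∀ x, w x ≤ L) : Integrable w μ :=
  (integrable_const L).mono' hw.aestronglyMeasurable
    (Filter.Eventually.of_forall fun x => by
      rw [Real.norm_of_nonneg (h0 x)]; exact hL x)

lemma integral_diff_le_mul_l1Dist {α : Type*} [MeasurableSpace α]
    (ν₁ ν₂ : Measure α) [IsProbabilityMeasure ν₁] [IsProbabilityMeasure ν₂]
    {w : α → ℝ} (hw : Measurable w) {L : ℝ}
    (h0 : ∀ x, 0 ≤ w x) (hL : ∀ x, w x ≤ L) :
    ∫ x, w x ∂ν₁ ≤ ∫ x, w x ∂ν₂ + L * l1Dist ν₁ ν₂ := by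
  set ρ : Measure α := ν₁ + ν₂ with hρ
  have hac₁ : ν₁ ≪ ρ := Measure.absolutelyContinuous_of_le (Measure.le_add_right le_rfl)
  have hac₂ : ν₂ ≪ ρ := Measure.absolutelyContinuous_of_le (Measure.le_add_left le_rfl)
  have hwint₁ : Integrable w ν₁ := integrable_of_bounded' hw h0 hL
  have hwint₂ : Integrable w ν₂ := integrable_of_bounded' hw h0 hL
  have h1 : ∫ x, (ν₁.rnDeriv ρ x).toReal • w x ∂ρ = ∫ x, w x ∂ν₁ :=
    integral_rnDeriv_smul hac₁
  have h2 : ∫ x, (ν₂.rnDeriv ρ x).toReal • w x ∂ρ = ∫ x, w x ∂ν₂ :=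
    integral_rnDeriv_smul hac₂
  have hi1 : Integrable (fun x => (ν₁.rnDeriv ρ x).toReal • w x) ρ :=
    (integrable_rnDeriv_smul_iff hac₁).mpr hwint₁
  have hi2 : Integrable (fun x => (ν₂.rnDeriv ρ x).toReal • w x) ρ :=
    (integrable_rnDeriv_smul_iff hac₂).mpr hwint₂
  have hp : Integrable (fun x => (ν₁.rnDeriv ρ x).toReal) ρ :=
    Measure.integrable_toReal_rnDeriv
  have hq : Integrable (fun x => (ν₂.rnDeriv ρ x).toReal) ρ :=
    Measure.integrable_toReal_rnDeriv
  have habs : Integrable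
      (fun x => |(ν₁.rnDeriv ρ x).toReal - (ν₂.rnDeriv ρ x).toReal| * L) ρ :=
    (hp.sub hq).abs.mul_const L
  have key : ∫ x, w x ∂ν₁ - ∫ x, w x ∂ν₂ ≤ L * l1Dist ν₁ ν₂ := by
    rw [← h1, ← h2, ← integral_sub hi1 hi2]
    have hmono : ∫ x, ((ν₁.rnDeriv ρ x).toReal • w x - (ν₂.rnDeriv ρ x).toReal • w x) ∂ρ
        ≤ ∫ x, |(ν₁.rnDeriv ρ x).toReal - (ν₂.rnDeriv ρ x).toReal| * L ∂ρ := by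
      refine integral_mono (hi1.sub hi2) habs fun x => ?_
      have : (ν₁.rnDeriv ρ x).toReal • w x - (ν₂.rnDeriv ρ x).toReal • w x
          = ((ν₁.rnDeriv ρ x).toReal - (ν₂.rnDeriv ρ x).toReal) * w x := by
        simp [smul_eq_mul, sub_mul]
      rw [this]
      calc ((ν₁.rnDeriv ρ x).toReal - (ν₂.rnDeriv ρ x).toReal) * w x
          ≤ |(ν₁.rnDeriv ρ x).toReal - (ν₂.rnDeriv ρ x).toReal| * w x :=
            mul_le_mul_of_nonneg_right (le_abs_self _) (h0 x)
        _ ≤ |(ν₁.rnDeriv ρ x).toReal - (ν₂.rnDeriv ρ x).toReal| * L :=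
            mul_le_mul_of_nonneg_left (hL x) (abs_nonneg _)
    calc ∫ x, ((ν₁.rnDeriv ρ x).toReal • w x - (ν₂.rnDeriv ρ x).toReal • w x) ∂ρ
        ≤ ∫ x, |(ν₁.rnDeriv ρ x).toReal - (ν₂.rnDeriv ρ x).toReal| * L ∂ρ := hmono
      _ = L * l1Dist ν₁ ν₂ := by
          rw [integral_mul_const, mul_comm]; rfl
  linarith

/-- Inequality (16) in the proof of Lemma 1: for an invertible representation `f` and a loss
`ℓ` that is nonnegative, symmetric, bounded by `L` and satisfies the triangle inequality,
`R⁽ᵘ⁾(h) ≤ R⁽ˢ⁾(h) + E_{x∼μ⁽ˢ⁾}[ℓ(h⁽ᵘ⁾(x), h⁽ˢ⁾(x))] + L ‖f_# μ⁽ᵘ⁾ − f_# μ⁽ˢ⁾‖₁`. -/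
theorem risk_bound_seen_combined_l1
    (d d' : ℕ) {Y : Type*} [MeasurableSpace Y]
    (μu μs : Measure (EuclideanSpace ℝ (Fin d)))
    [IsProbabilityMeasure μu] [IsProbabilityMeasure μs]
    (f fu fs : EuclideanSpace ℝ (Fin d) → EuclideanSpace ℝ (Fin d'))
    (g gu gs : EuclideanSpace ℝ (Fin d') → Y)
    (hf : Measurable f) (hfu : Measurable fu) (hfs : Measurable fs)
    (hg : Measurable g) (hgu : Measurable gu) (hgs : Measurable gs)
    (hfinv : Function.Bijective f)
    (ℓ : Y → Y → ℝ) (L : ℝ) (hL : 0 < L)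
    (hℓmeas : Measurable (Function.uncurry ℓ))
    (hℓnonneg : ∀ a b, 0 ≤ ℓ a b)
    (hℓsymm : ∀ a b, ℓ a b = ℓ b a)
    (hℓbdd : ∀ a b, ℓ a b ≤ L)
    (hℓtri : ∀ a b c, ℓ a c ≤ ℓ a b + ℓ b c) :
    ∫ x, ℓ (g (f x)) (gu (fu x)) ∂μu ≤
      (∫ x, ℓ (g (f x)) (gs (fs x)) ∂μs)
      + (∫ x, ℓ (gu (fu x)) (gs (fs x)) ∂μs)
      + L * l1Dist (μu.map f) (μs.map f) := by
  have hme : MeasurableEmbedding f := hf.measurableEmbedding hfinv.injective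
  have hli : Function.LeftInverse (Function.invFun f) f :=
    Function.leftInverse_invFun hfinv.injective
  have hinvmeas : Measurable (Function.invFun f) := by
    intro s hs
    have himg : Function.invFun f ⁻¹' s = f '' s := by
      ext y
      constructor
      · intro hy
        exact ⟨Function.invFun f y, hy, Function.invFun_eq (hfinv.surjective y)⟩
      · rintro ⟨x, hx, rfl⟩
        simpa [hli x] using hx
    rw [himg]
    exact hme.measurableSet_image.2 hs
  -- the transported integrand
  set w : EuclideanSpace ℝ (Fin d') → ℝ :=
    fun y => ℓ (g y) (gu (fu (Function.invFun f y))) with hwdef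
  have hwmeas : Measurable w :=
    hℓmeas.comp (hg.prodMk (hgu.comp (hfu.comp hinvmeas)))
  have hw0 : ∀ y, 0 ≤ w y := fun y => hℓnonneg _ _
  have hwL : ∀ y, w y ≤ L := fun y => hℓbdd _ _
  have hwf : ∀ x, w (f x) = ℓ (g (f x)) (gu (fu x)) := fun x => by
    simp [hwdef, hli x]
  haveI : IsProbabilityMeasure (μu.map f) := Measure.isProbabilityMeasure_map hf.aemeasurable
  haveI : IsProbabilityMeasure (μs.map f) := Measure.isProbabilityMeasure_map hf.aemeasurable
  have hmapu : ∫ y, w y ∂(μu.map f) = ∫ x, ℓ (g (f x)) (gu (fu x)) ∂μu := by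
    rw [integral_map hf.aemeasurable hwmeas.aestronglyMeasurable]
    exact integral_congr_ae (Filter.Eventually.of_forall fun x => hwf x)
  have hmaps : ∫ y, w y ∂(μs.map f) = ∫ x, ℓ (g (f x)) (gu (fu x)) ∂μs := by
    rw [integral_map hf.aemeasurable hwmeas.aestronglyMeasurable]
    exact integral_congr_ae (Filter.Eventually.of_forall fun x => hwf x)
  have step1 : ∫ x, ℓ (g (f x)) (gu (fu x)) ∂μu ≤
      ∫ x, ℓ (g (f x)) (gu (fu x)) ∂μs + L * l1Dist (μu.map f) (μs.map f) := by
    rw [← hmapu, ← hmaps]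
    exact integral_diff_le_mul_l1Dist (μu.map f) (μs.map f) hwmeas hw0 hwL
  -- triangle inequality on the seen domain
  have m1 : Measurable fun x => ℓ (g (f x)) (gs (fs x)) :=
    hℓmeas.comp ((hg.comp hf).prodMk (hgs.comp hfs))
  have m2 : Measurable fun x => ℓ (gu (fu x)) (gs (fs x)) :=
    hℓmeas.comp ((hgu.comp hfu).prodMk (hgs.comp hfs))
  have i1 : Integrable (fun x => ℓ (g (f x)) (gs (fs x))) μs :=
    integrable_of_bounded' m1 (fun x => hℓnonneg _ _) (fun x => hℓbdd _ _)
  have i2 : Integrable (fun x => ℓ (gu (fu x)) (gs (fs x))) μs :=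
    integrable_of_bounded' m2 (fun x => hℓnonneg _ _) (fun x => hℓbdd _ _)
  have m0 : Measurable fun x => ℓ (g (f x)) (gu (fu x)) :=
    hℓmeas.comp ((hg.comp hf).prodMk (hgu.comp hfu))
  have i0 : Integrable (fun x => ℓ (g (f x)) (gu (fu x))) μs :=
    integrable_of_bounded' m0 (fun x => hℓnonneg _ _) (fun x => hℓbdd _ _)
  have step2 : ∫ x, ℓ (g (f x)) (gu (fu x)) ∂μs ≤
      (∫ x, ℓ (g (f x)) (gs (fs x)) ∂μs) + (∫ x, ℓ (gu (fu x)) (gs (fs x)) ∂μs) := by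
    rw [← integral_add i1 i2]
    refine integral_mono i0 (i1.add i2) fun x => ?_
    calc ℓ (g (f x)) (gu (fu x))
        ≤ ℓ (g (f x)) (gs (fs x)) + ℓ (gs (fs x)) (gu (fu x)) := hℓtri _ _ _
      _ = ℓ (g (f x)) (gs (fs x)) + ℓ (gu (fu x)) (gs (fs x)) := by rw [hℓsymm (gs (fs x))]
  linarith
end
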